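/- Let q be a complex number with |q| < 1, and let a, c be complex numbers with a ≠ 0 and a avoiding the poles below. For any integers r, s ≥ 0: ∑_{k=0}^{r} [r+s-k choose r-k]_q ((c;q)_k / (-aq;q)_k) q^{(s+1)k} − ((1+a)/(c+a)) ∑_{k=0}^{s} [r+s-k choose s-k]_q ((c;q)_k / (-cq/a;q)_k) (−1/a)^k = (−1/a)^{s+1} (c;q)_{1+r+s} / ((-aq;q)_r (-c/a;q)_{s+1}). -/

import Mathlib

open Finset Complex

/-- finite q-Pochhammer symbol `(x; q)_n` -/
noncomputable def qp (q x : ℂ) (n : ℕ) : ℂ := ∏ j ∈ Finset.range n, (1 - x * q ^ j)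

/-- infinite q-Pochhammer symbol `(x; q)_∞` -/
noncomputable def qpi (q x : ℂ) : ℂ := ∏' j : ℕ, (1 - x * q ^ j)

/-- Gaussian (q-binomial) coefficient -/
noncomputable def qbinom (q : ℂ) (n k : ℕ) : ℂ := qp q q n / (qp q q k * qp q q (n - k))

/-
Both sides, as functions of `(r, s)`, satisfy `F (r+1) (s+1) = F r (s+1) + q^(r+1) * F (r+1) s`:
for the two sums this is the q-Pascal rule applied termwise (in its two forms, one per sum), for
the closed form a rational identity. On the boundary `r = 0` or `s = 0` one sum collapses to its
`k = 0` term while the other is a telescoping sum with the closed form as its value, so both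
sides agree everywhere.
-/

lemma qp_zero (q x : ℂ) : qp q x 0 = 1 := prod_range_zero _

lemma qp_succ (q x : ℂ) (n : ℕ) : qp q x (n + 1) = qp q x n * (1 - x * q ^ n) :=
  prod_range_succ _ _

lemma qp_succ' (q x : ℂ) (n : ℕ) : qp q x (n + 1) = (1 - x) * qp q (x * q) n := by
  rw [qp, prod_range_succ', pow_zero, mul_one, mul_comm, qp]
  congr 1
  refine prod_congr rfl fun j _ => ?_
  ring

lemma qp_ne_zero {q x : ℂ} {n : ℕ} (h : ∀ j < n, x * q ^ j ≠ 1) : qp q x n ≠ 0 :=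
  prod_ne_zero_iff.mpr fun j hj => sub_ne_zero.mpr (h j (mem_range.mp hj)).symm

lemma one_sub_mul_pow_ne_zero {q : ℂ} (hq : ‖q‖ < 1) (k : ℕ) : 1 - q * q ^ k ≠ 0 := by
  rw [← pow_succ']
  refine sub_ne_zero.mpr fun h => ?_
  have : ‖q ^ (k + 1)‖ < 1 := by
    rw [norm_pow]
    exact pow_lt_one₀ (norm_nonneg q) hq (Nat.succ_ne_zero k)
  simp [← h] at this

lemma qp_self_ne_zero {q : ℂ} (hq : ‖q‖ < 1) (n : ℕ) : qp q q n ≠ 0 :=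
  qp_ne_zero fun j _ h => one_sub_mul_pow_ne_zero hq j (by rw [h, sub_self])

lemma qp_neg_mul_ne_zero {q a : ℂ} {n : ℕ} (hA : ∀ m < n, a * q ^ (m + 1) ≠ -1) :
    qp q (-a * q) n ≠ 0 :=
  qp_ne_zero fun j hj h => hA j hj (by linear_combination -h)

lemma qp_neg_div_ne_zero {q a x : ℂ} {n : ℕ} (ha : a ≠ 0) (hx : ∀ m < n, x * q ^ m ≠ -a) :
    qp q (-x / a) n ≠ 0 :=
  qp_ne_zero fun j hj h => hx j hj (by field_simp at h; linear_combination -h)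

lemma qbinom_zero_right {q : ℂ} (hq : ‖q‖ < 1) (n : ℕ) : qbinom q n 0 = 1 := by
  rw [qbinom, Nat.sub_zero, qp_zero, one_mul, div_self (qp_self_ne_zero hq n)]

lemma qbinom_self {q : ℂ} (hq : ‖q‖ < 1) (n : ℕ) : qbinom q n n = 1 := by
  rw [qbinom, Nat.sub_self, qp_zero, mul_one, div_self (qp_self_ne_zero hq n)]

lemma qbinom_succ_succ {q : ℂ} (hq : ‖q‖ < 1) (k m : ℕ) :
    qbinom q (k + m + 2) (k + 1) =
      qbinom q (k + m + 1) k + q ^ (k + 1) * qbinom q (k + m + 1) (k + 1) := by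
  rw [qbinom, qbinom, qbinom, show k + m + 2 - (k + 1) = m + 1 by omega,
    show k + m + 1 - k = m + 1 by omega, show k + m + 1 - (k + 1) = m by omega,
    show k + m + 2 = k + m + 1 + 1 by omega, qp_succ q q (k + m + 1), qp_succ q q k, qp_succ q q m]
  have := qp_self_ne_zero hq k
  have := qp_self_ne_zero hq m
  have := one_sub_mul_pow_ne_zero hq k
  have := one_sub_mul_pow_ne_zero hq m
  field_simp
  ring

lemma qbinom_succ_succ' {q : ℂ} (hq : ‖q‖ < 1) (k m : ℕ) :
    qbinom q (k + m + 2) (k + 1) =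
      q ^ (m + 1) * qbinom q (k + m + 1) k + qbinom q (k + m + 1) (k + 1) := by
  rw [qbinom, qbinom, qbinom, show k + m + 2 - (k + 1) = m + 1 by omega,
    show k + m + 1 - k = m + 1 by omega, show k + m + 1 - (k + 1) = m by omega,
    show k + m + 2 = k + m + 1 + 1 by omega, qp_succ q q (k + m + 1), qp_succ q q k, qp_succ q q m]
  have := qp_self_ne_zero hq k
  have := qp_self_ne_zero hq m
  have := one_sub_mul_pow_ne_zero hq k
  have := one_sub_mul_pow_ne_zero hq m
  field_simp
  ring

noncomputable def qbinomSumFst (q : ℂ) (f : ℕ → ℂ) (r s : ℕ) : ℂ :=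
  ∑ k ∈ range (r + 1), qbinom q (r + s - k) (r - k) * f k * q ^ ((s + 1) * k)

noncomputable def qbinomSumSnd (q y : ℂ) (f : ℕ → ℂ) (r s : ℕ) : ℂ :=
  ∑ k ∈ range (s + 1), qbinom q (r + s - k) (s - k) * f k * y ^ k

lemma qbinomSumFst_zero_left {q : ℂ} (hq : ‖q‖ < 1) (f : ℕ → ℂ) (s : ℕ) :
    qbinomSumFst q f 0 s = f 0 := by
  simp [qbinomSumFst, qbinom_zero_right hq]

lemma qbinomSumFst_zero_right {q : ℂ} (hq : ‖q‖ < 1) (f : ℕ → ℂ) (r : ℕ) :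
    qbinomSumFst q f r 0 = ∑ k ∈ range (r + 1), f k * q ^ k := by
  refine sum_congr rfl fun k _ => ?_
  rw [add_zero, qbinom_self hq, one_mul, zero_add, one_mul]

lemma qbinomSumSnd_zero_left {q : ℂ} (hq : ‖q‖ < 1) (y : ℂ) (f : ℕ → ℂ) (s : ℕ) :
    qbinomSumSnd q y f 0 s = ∑ k ∈ range (s + 1), f k * y ^ k := by
  refine sum_congr rfl fun k _ => ?_
  rw [zero_add, qbinom_self hq, one_mul]

lemma qbinomSumSnd_zero_right {q : ℂ} (hq : ‖q‖ < 1) (y : ℂ) (f : ℕ → ℂ) (r : ℕ) :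
    qbinomSumSnd q y f r 0 = f 0 := by
  simp [qbinomSumSnd, qbinom_zero_right hq]

lemma qbinomSumFst_succ_succ {q : ℂ} (hq : ‖q‖ < 1) (f : ℕ → ℂ) (r s : ℕ) :
    qbinomSumFst q f (r + 1) (s + 1) =
      qbinomSumFst q f r (s + 1) + q ^ (r + 1) * qbinomSumFst q f (r + 1) s := by
  have hterm : ∀ k ∈ range (r + 1),
      qbinom q (r + 1 + (s + 1) - k) (r + 1 - k) * f k * q ^ ((s + 1 + 1) * k) =
        qbinom q (r + (s + 1) - k) (r - k) * f k * q ^ ((s + 1 + 1) * k) +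
          q ^ (r + 1) * (qbinom q (r + 1 + s - k) (r + 1 - k) * f k * q ^ ((s + 1) * k)) := by
    intro k hk
    obtain ⟨m, rfl⟩ : ∃ m, r = m + k := ⟨r - k, by grind⟩
    rw [show m + k + 1 + (s + 1) - k = m + s + 2 by omega, show m + k + 1 - k = m + 1 by omega,
      show m + k + (s + 1) - k = m + s + 1 by omega, show m + k - k = m by omega,
      show m + k + 1 + s - k = m + s + 1 by omega, qbinom_succ_succ hq]
    ring
  rw [qbinomSumFst, sum_range_succ, sum_congr rfl hterm, sum_add_distrib, ← mul_sum,
    qbinomSumFst, qbinomSumFst, sum_range_succ (n := r + 1), Nat.sub_self, qbinom_zero_right hq,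
    qbinom_zero_right hq]
  ring

lemma qbinomSumSnd_succ_succ {q : ℂ} (hq : ‖q‖ < 1) (y : ℂ) (f : ℕ → ℂ) (r s : ℕ) :
    qbinomSumSnd q y f (r + 1) (s + 1) =
      qbinomSumSnd q y f r (s + 1) + q ^ (r + 1) * qbinomSumSnd q y f (r + 1) s := by
  have hterm : ∀ k ∈ range (s + 1),
      qbinom q (r + 1 + (s + 1) - k) (s + 1 - k) * f k * y ^ k =
        qbinom q (r + (s + 1) - k) (s + 1 - k) * f k * y ^ k +
          q ^ (r + 1) * (qbinom q (r + 1 + s - k) (s - k) * f k * y ^ k) := by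
    intro k hk
    obtain ⟨m, rfl⟩ : ∃ m, s = m + k := ⟨s - k, by grind⟩
    rw [show r + 1 + (m + k + 1) - k = m + r + 2 by omega, show m + k + 1 - k = m + 1 by omega,
      show r + (m + k + 1) - k = m + r + 1 by omega, show r + 1 + (m + k) - k = m + r + 1 by omega,
      show m + k - k = m by omega, qbinom_succ_succ' hq]
    ring
  rw [qbinomSumSnd, sum_range_succ, sum_congr rfl hterm, sum_add_distrib, ← mul_sum,
    qbinomSumSnd, qbinomSumSnd, sum_range_succ (n := s + 1), Nat.sub_self,
    qbinom_zero_right hq, qbinom_zero_right hq]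
  ring

lemma sum_qp_div_qp_neg_mul_mul_pow_mul {q a c : ℂ} {n : ℕ}
    (hA : ∀ m : ℕ, m ≤ n → a * q ^ (m + 1) ≠ -1) :
    (∑ k ∈ range (n + 1), qp q c k / qp q (-a * q) k * q ^ k) * (c + a) =
      1 + a - qp q c (n + 1) / qp q (-a * q) n := by
  induction n with
  | zero =>
    simp only [zero_add, sum_range_one, qp_succ, qp_zero, div_one, pow_zero, mul_one, one_mul]
    ring
  | succ n ih =>
    have hD : qp q (-a * q) n ≠ 0 := qp_neg_mul_ne_zero fun m hm => hA m (by omega)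
    have hfac : 1 + a * q ^ (n + 1) ≠ 0 := fun h => hA n (by omega) (by linear_combination h)
    rw [sum_range_succ, add_mul, ih fun m hm => hA m (by omega), qp_succ q c (n + 1),
      qp_succ q (-a * q) n, show 1 - -a * q * q ^ n = 1 + a * q ^ (n + 1) by ring]
    field_simp
    ring

lemma mul_sum_qp_div_qp_neg_div_mul_pow {q a c : ℂ} {n : ℕ} (ha : a ≠ 0)
    (hC : ∀ m : ℕ, m ≤ n → c * q ^ m ≠ -a) :
    (1 + a) * ∑ k ∈ range (n + 1), qp q c k / qp q (-c * q / a) k * (-1 / a) ^ k =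
      (c + a) * (1 - (-1 / a) ^ (n + 1) * qp q c (n + 1) / qp q (-c / a) (n + 1)) := by
  have hac : a + c ≠ 0 := fun h => hC 0 (Nat.zero_le n) (by linear_combination h)
  induction n with
  | zero =>
    simp only [zero_add, sum_range_one, qp_succ, qp_zero, pow_zero, pow_one, mul_one, one_mul,
      div_one]
    rw [show 1 - -c / a = (a + c) / a by field_simp; ring]
    field_simp
    ring
  | succ n ih =>
    have hD : qp q (-c * q / a) n ≠ 0 := by
      rw [show -c * q / a = -(c * q) / a by ring]
      exact qp_neg_div_ne_zero ha fun m hm => by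
        rw [mul_assoc, ← pow_succ']; exact hC (m + 1) (by omega)
    have hfac : a + c * q ^ (n + 1) ≠ 0 := fun h => hC (n + 1) le_rfl (by linear_combination h)
    rw [sum_range_succ, mul_add, ih fun m hm => hC m (by omega), qp_succ q c (n + 1),
      qp_succ q (-c * q / a) n, qp_succ q (-c / a) (n + 1), qp_succ' q (-c / a) n,
      show -c / a * q = -c * q / a by ring, show 1 - -c / a = (a + c) / a by field_simp; ring,
      show 1 - -c * q / a * q ^ n = (a + c * q ^ (n + 1)) / a by field_simp; ring,
      show 1 - -c / a * q ^ (n + 1) = (a + c * q ^ (n + 1)) / a by field_simp; ring]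
    generalize qp q (-c * q / a) n = B at hD ⊢
    simp only [div_pow]
    field_simp
    ring

noncomputable def pairedSum (q a c : ℂ) (r s : ℕ) : ℂ :=
  qbinomSumFst q (fun k => qp q c k / qp q (-a * q) k) r s -
    (1 + a) / (c + a) * qbinomSumSnd q (-1 / a) (fun k => qp q c k / qp q (-c * q / a) k) r s

noncomputable def closedForm (q a c : ℂ) (r s : ℕ) : ℂ :=
  (-1 / a) ^ (s + 1) * qp q c (1 + r + s) / (qp q (-a * q) r * qp q (-c / a) (s + 1))

lemma pairedSum_succ_succ {q : ℂ} (hq : ‖q‖ < 1) (a c : ℂ) (r s : ℕ) :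
    pairedSum q a c (r + 1) (s + 1) =
      pairedSum q a c r (s + 1) + q ^ (r + 1) * pairedSum q a c (r + 1) s := by
  simp only [pairedSum, qbinomSumFst_succ_succ hq, qbinomSumSnd_succ_succ hq]
  ring

lemma pairedSum_zero_left {q a c : ℂ} {s : ℕ} (hq : ‖q‖ < 1) (ha : a ≠ 0)
    (hC : ∀ m : ℕ, m ≤ s → c * q ^ m ≠ -a) :
    pairedSum q a c 0 s = closedForm q a c 0 s := by
  have hca : c + a ≠ 0 := fun h => hC 0 (Nat.zero_le s) (by linear_combination h)
  rw [pairedSum, closedForm, qbinomSumFst_zero_left hq, qbinomSumSnd_zero_left hq,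
    div_mul_eq_mul_div,
    mul_sum_qp_div_qp_neg_div_mul_pow ha hC, mul_div_cancel_left₀ _ hca, qp_zero, qp_zero,
    add_zero, add_comm 1 s]
  ring

lemma pairedSum_zero_right {q a c : ℂ} {r : ℕ} (hq : ‖q‖ < 1) (ha : a ≠ 0) (hca : c + a ≠ 0)
    (hA : ∀ m : ℕ, m ≤ r → a * q ^ (m + 1) ≠ -1) :
    pairedSum q a c r 0 = closedForm q a c r 0 := by
  have hsum := sum_qp_div_qp_neg_mul_mul_pow_mul (c := c) hA
  have hD : qp q (-a * q) r ≠ 0 := qp_neg_mul_ne_zero fun m hm => hA m hm.le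
  have hac : a + c ≠ 0 := by rwa [add_comm]
  rw [pairedSum, closedForm, qbinomSumFst_zero_right hq, qbinomSumSnd_zero_right hq,
    eq_div_of_mul_eq hca hsum, qp_zero, qp_zero, div_one, mul_one, add_zero, add_comm 1 r,
    pow_one, show qp q (-c / a) 1 = (a + c) / a by simp [qp]; field_simp; ring]
  generalize qp q (-a * q) r = D at hD ⊢
  field_simp
  ring

theorem X : True := trivial

/- With `z = -1/a` the recurrence reduces to
`z * (1 - c q^(r+s+2)) = z * (1 + a q^(r+1)) + q^(r+1) * (1 + c q^(s+1) / a)`. -/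
lemma closedForm_succ_succ {q a c : ℂ} {r s : ℕ} (ha : a ≠ 0)
    (hA : ∀ m : ℕ, m ≤ r → a * q ^ (m + 1) ≠ -1) (hC : ∀ m : ℕ, m ≤ s + 1 → c * q ^ m ≠ -a) :
    closedForm q a c (r + 1) (s + 1) =
      closedForm q a c r (s + 1) + q ^ (r + 1) * closedForm q a c (r + 1) s := by
  have hX : qp q (-a * q) r ≠ 0 := qp_neg_mul_ne_zero fun m hm => hA m hm.le
  have hY : qp q (-c / a) (s + 1) ≠ 0 := qp_neg_div_ne_zero ha fun m hm => hC m hm.le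
  have hfacA : 1 + a * q ^ (r + 1) ≠ 0 := fun h => hA r le_rfl (by linear_combination h)
  have hfacC : a + c * q ^ (s + 1) ≠ 0 := fun h => hC (s + 1) le_rfl (by linear_combination h)
  rw [closedForm, closedForm, closedForm, show 1 + (r + 1) + (s + 1) = r + s + 2 + 1 by omega,
    show 1 + r + (s + 1) = r + s + 2 by omega, show 1 + (r + 1) + s = r + s + 2 by omega,
    qp_succ q c (r + s + 2), qp_succ q (-a * q) r, qp_succ q (-c / a) (s + 1),
    show 1 - -a * q * q ^ r = 1 + a * q ^ (r + 1) by ring,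
    show 1 - -c / a * q ^ (s + 1) = (a + c * q ^ (s + 1)) / a by field_simp; ring]
  generalize qp q (-a * q) r = X at hX ⊢
  generalize qp q (-c / a) (s + 1) = Y at hY ⊢
  simp only [div_pow]
  field_simp
  ring

lemma eq_zero_of_grid_recurrence {α : Type*} [NonUnitalNonAssocSemiring α] {E : ℕ → ℕ → α}
    (w : ℕ → α) {R S : ℕ} (hleft : ∀ s ≤ S, E 0 s = 0) (hbottom : ∀ r ≤ R, E r 0 = 0)
    (hrec : ∀ r < R, ∀ s < S, E (r + 1) (s + 1) = E r (s + 1) + w r * E (r + 1) s) :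
    E R S = 0 := by
  suffices ∀ r ≤ R, ∀ s ≤ S, E r s = 0 from this R le_rfl S le_rfl
  intro r
  induction r with
  | zero => exact fun _ => hleft
  | succ r ihr =>
    intro hr s
    induction s with
    | zero => exact fun _ => hbottom _ hr
    | succ s ihs =>
      intro hs
      rw [hrec r hr s hs, ihr (Nat.le_of_succ_le hr) (s + 1) hs, ihs (Nat.le_of_succ_le hs),
        mul_zero, add_zero]

theorem stmt_3 (q a c : ℂ) (r s : ℕ) (hq : ‖q‖ < 1) (ha : a ≠ 0)
    (hA : ∀ m : ℕ, m ≤ r → a * q ^ (m + 1) ≠ -1)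
    (hC : ∀ m : ℕ, m ≤ s → c * q ^ m ≠ -a) :
    ∑ k ∈ Finset.range (r + 1),
        qbinom q (r + s - k) (r - k) * (qp q c k / qp q (-a * q) k) * q ^ ((s + 1) * k) -
      (1 + a) / (c + a) * ∑ k ∈ Finset.range (s + 1),
        qbinom q (r + s - k) (s - k) * (qp q c k / qp q (-c * q / a) k) * (-1 / a) ^ k =
      (-1 / a) ^ (s + 1) * qp q c (1 + r + s) / (qp q (-a * q) r * qp q (-c / a) (s + 1)) := by
  have hca : c + a ≠ 0 := fun h => hC 0 (Nat.zero_le s) (by linear_combination h)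
  refine sub_eq_zero.mp (eq_zero_of_grid_recurrence
    (E := fun r s => pairedSum q a c r s - closedForm q a c r s) (fun r => q ^ (r + 1)) ?_ ?_ ?_)
  · exact fun s' hs' => sub_eq_zero.mpr <|
      pairedSum_zero_left hq ha fun m hm => hC m (hm.trans hs')
  · exact fun r' hr' => sub_eq_zero.mpr <|
      pairedSum_zero_right hq ha hca fun m hm => hA m (hm.trans hr')
  · intro r' hr' s' hs'
    rw [pairedSum_succ_succ hq, closedForm_succ_succ ha (fun m hm => hA m (by omega))
      (fun m hm => hC m (by omega))]
    ring
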